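/- Collections of B_1-paths on the triangular grid are strong 3-Helly: for every finite family F of at least three paths on the triangular grid, each with at most one bend, there exist three members P, Q, R of F such that E(P) ∩ E(Q) ∩ E(R) equals the intersection of the edge sets E(S) over all members S of F. -/

import Mathlib

/-- The triangular grid: the simple graph on `ℤ × ℤ` where two points are adjacent
iff their difference is `±(1,0)`, `±(0,1)` or `±(1,1)`. -/
def TGrid : SimpleGraph (ℤ × ℤ) where
  Adj u v :=
    (v.1 - u.1 = 1 ∧ v.2 - u.2 = 0) ∨ (v.1 - u.1 = -1 ∧ v.2 - u.2 = 0) ∨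
    (v.1 - u.1 = 0 ∧ v.2 - u.2 = 1) ∨ (v.1 - u.1 = 0 ∧ v.2 - u.2 = -1) ∨
    (v.1 - u.1 = 1 ∧ v.2 - u.2 = 1) ∨ (v.1 - u.1 = -1 ∧ v.2 - u.2 = -1)
  symm := ⟨by intro u v h; omega⟩
  loopless := ⟨by intro u h; omega⟩

/-- The (symmetric) direction datum of a grid edge: the pair of absolute coordinate
differences.  For grid edges this is `(1,0)` (horizontal), `(0,1)` (vertical) or
`(1,1)` (diagonal). -/
def edir (e : Sym2 (ℤ × ℤ)) : ℤ × ℤ :=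
  Sym2.lift ⟨fun u v => (|u.1 - v.1|, |u.2 - v.2|), by
    intro u v; simp [abs_sub_comm]⟩ e

/-- The `t`-th edge of a walk. -/
def wEdge {u v : ℤ × ℤ} (p : TGrid.Walk u v) (t : ℕ) : Sym2 (ℤ × ℤ) :=
  s(p.getVert t, p.getVert (t + 1))

/-- The number of bends of a walk: the number of consecutive pairs of edges with
different directions. -/
def bendCount {u v : ℤ × ℤ} (p : TGrid.Walk u v) : ℕ :=
  (List.range (p.length - 1)).countP
    (fun i => decide (edir (wEdge p i) ≠ edir (wEdge p (i + 1))))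

/-- `b` is a bend point of the walk `p`. -/
def IsBendAt {u v : ℤ × ℤ} (p : TGrid.Walk u v) (b : ℤ × ℤ) : Prop :=
  ∃ i : ℕ, i + 2 ≤ p.length ∧ p.getVert (i + 1) = b ∧
    edir (wEdge p i) ≠ edir (wEdge p (i + 1))

/-- A (nontrivial simple) path on the triangular grid. -/
structure TPath where
  src : ℤ × ℤ
  dst : ℤ × ℤ
  walk : TGrid.Walk src dst
  isPath : walk.IsPath
  nontriv : 0 < walk.length

/-- The set of grid edges of a path. -/
def pEdges (P : TPath) : Set (Sym2 (ℤ × ℤ)) := {e | e ∈ P.walk.edges}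

/-- The set of grid points of a path. -/
def pPts (P : TPath) : Set (ℤ × ℤ) := {q | q ∈ P.walk.support}

/-- A segment of a path: a maximal straight (bend-free) subpath, recorded by the
interval of edge indices `[i, j)` it occupies. -/
structure Segment (P : TPath) where
  i : ℕ
  j : ℕ
  lt : i < j
  le : j ≤ P.walk.length
  straight : ∀ t, i ≤ t → t < j → edir (wEdge P.walk t) = edir (wEdge P.walk i)
  maxLeft : i = 0 ∨ edir (wEdge P.walk (i - 1)) ≠ edir (wEdge P.walk i)
  maxRight : j = P.walk.length ∨ edir (wEdge P.walk (j - 1)) ≠ edir (wEdge P.walk j)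

/-- The set of grid edges of a segment. -/
def Segment.edges {P : TPath} (s : Segment P) : Set (Sym2 (ℤ × ℤ)) :=
  {e | ∃ t, s.i ≤ t ∧ t < s.j ∧ e = wEdge P.walk t}

/-- The set of grid points of a segment. -/
def Segment.pts {P : TPath} (s : Segment P) : Set (ℤ × ℤ) :=
  {q | ∃ t, s.i ≤ t ∧ t ≤ s.j ∧ q = P.walk.getVert t}

/-- The direction of a segment. -/
def Segment.dir {P : TPath} (s : Segment P) : ℤ × ℤ := edir (wEdge P.walk s.i)

/-- The three directions of the triangular grid. -/
inductive Dir | H | V | D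
deriving DecidableEq

/-- The direction of the (straight) line from `a` to `b`. -/
def dirOf (a b : ℤ × ℤ) : Dir :=
  if a.2 = b.2 then .H else if a.1 = b.1 then .V else .D

/-- A grid line of the triangular grid: a full horizontal, vertical or diagonal line. -/
structure GridLine where
  dir : Dir
  c : ℤ

/-- The parametrization of the points of a grid line. -/
def GridLine.pt (l : GridLine) (t : ℤ) : ℤ × ℤ :=
  match l.dir with
  | .H => (t, l.c)
  | .V => (l.c, t)
  | .D => (l.c + t, t)

/-- The `t`-th edge of a grid line. -/
def GridLine.edge (l : GridLine) (t : ℤ) : Sym2 (ℤ × ℤ) := s(l.pt t, l.pt (t + 1))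

/-- The set of grid points of a grid line. -/
def GridLine.pts (l : GridLine) : Set (ℤ × ℤ) := Set.range l.pt

/-- The set of grid edges of a grid line. -/
def GridLine.edges (l : GridLine) : Set (Sym2 (ℤ × ℤ)) := Set.range l.edge

/-- A right triangle of the triangular grid, given by a base corner `p`, a leg
length `k ≥ 1`, and one of the two possible orientations. -/
structure RightTri where
  p : ℤ × ℤ
  k : ℤ
  hk : 1 ≤ k
  orientA : Bool

/-- The set of grid edges of a right triangle. -/
def RightTri.edges (T : RightTri) : Set (Sym2 (ℤ × ℤ)) :=
  if T.orientA then
    {e | ∃ t : ℤ, 0 ≤ t ∧ t < T.k ∧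
      (e = s((T.p.1 + t, T.p.2), (T.p.1 + t + 1, T.p.2)) ∨
       e = s((T.p.1 + T.k, T.p.2 + t), (T.p.1 + T.k, T.p.2 + t + 1)) ∨
       e = s((T.p.1 + t, T.p.2 + t), (T.p.1 + t + 1, T.p.2 + t + 1)))}
  else
    {e | ∃ t : ℤ, 0 ≤ t ∧ t < T.k ∧
      (e = s((T.p.1, T.p.2 + t), (T.p.1, T.p.2 + t + 1)) ∨
       e = s((T.p.1 + t, T.p.2 + T.k), (T.p.1 + t + 1, T.p.2 + T.k)) ∨
       e = s((T.p.1 + t, T.p.2 + t), (T.p.1 + t + 1, T.p.2 + t + 1)))}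

/-- The three corners of a right triangle. -/
def RightTri.corners (T : RightTri) : Set (ℤ × ℤ) :=
  if T.orientA then {T.p, (T.p.1 + T.k, T.p.2), (T.p.1 + T.k, T.p.2 + T.k)}
  else {T.p, (T.p.1, T.p.2 + T.k), (T.p.1 + T.k, T.p.2 + T.k)}

/-- `U(𝒫)`: the subgraph of the grid formed by all segments of members of the family
that share at least one grid edge with another member, given by its set of edges. -/
def UEdges {ι : Type} (P : ι → TPath) : Set (Sym2 (ℤ × ℤ)) :=
  {e | ∃ i : ι, ∃ s : Segment (P i), e ∈ s.edges ∧
        ∃ j : ι, j ≠ i ∧ (s.edges ∩ pEdges (P j)).Nonempty}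

/-- A B₁-EPGₜ representation of a simple graph `G`: a family of at most-one-bend
paths on the triangular grid whose edge-intersection graph is `G`. -/
def IsB1EPGtRep {V : Type} (G : SimpleGraph V) (Rep : V → TPath) : Prop :=
  (∀ v, bendCount (Rep v).walk ≤ 1) ∧
  ∀ u v : V, u ≠ v → (G.Adj u v ↔ (pEdges (Rep u) ∩ pEdges (Rep v)).Nonempty)

/-! The edge set of a path with at most one bend is a *hook*: two rays from a common corner
along two distinct grid lines. A grid line meets a hook only if it is one of the hook's two lines,
and then in an interval. Fix a member `i` with lines `L₁`, `L₂`. If one member misses `L₁` and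
another misses `L₂`, these two and `i` have no common edge. Otherwise every member meets some
line `L` of `i`; taking `u` with the largest left end and `v` with the smallest right end of the
traces on `L` (Helly for intervals) handles all edges on `L`. The other edges of `u` lie on its
second line `M`, and every member meeting `M` has the lines `L` and `M`, hence the same corner.
So the traces on `M` are intervals ending at one point, and such a family has a member `c` with
`E u ∩ E c ∩ M` inside all of them. -/

open Set Function

section Intervals

variable {ι α : Type*} [Finite ι] [LinearOrder α]

theorem exists_Ico_inter_subset_iInter [Nonempty ι] (a b : ι → α) :
    ∃ u v, Ico (a u) (b u) ∩ Ico (a v) (b v) ⊆ ⋂ j, Ico (a j) (b j) := by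
  obtain ⟨u, hu⟩ := Finite.exists_max a
  obtain ⟨v, hv⟩ := Finite.exists_min b
  exact ⟨u, v, fun x ⟨⟨hux, _⟩, ⟨_, hxv⟩⟩ ↦
    mem_iInter.2 fun j ↦ ⟨(hu j).trans hux, hxv.trans_le (hv j)⟩⟩

/-- Intervals sharing the endpoint `κ` lie on the two sides of `κ`: if both sides occur,
any member is disjoint from one on the other side, and otherwise they are nested. -/
theorem exists_Ico_inter_subset_iInter_of_endpoint {a b : ι → α} {κ : α}
    (h : ∀ j, a j = κ ∨ b j = κ) (u : ι) :
    ∃ c, Ico (a u) (b u) ∩ Ico (a c) (b c) ⊆ ⋂ j, Ico (a j) (b j) := by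
  have : Nonempty ι := ⟨u⟩
  rcases h u with hu | hu
  · by_cases hleft : ∃ c, b c ≤ κ
    · obtain ⟨c, hc⟩ := hleft
      exact ⟨c, fun x ⟨⟨hux, _⟩, ⟨_, hxc⟩⟩ ↦ absurd (hu ▸ hux) (not_le.2 (hxc.trans_le hc))⟩
    · push Not at hleft
      have ha : ∀ j, a j = κ := fun j ↦ (h j).resolve_right (hleft j).ne'
      obtain ⟨c, hc⟩ := Finite.exists_min b
      exact ⟨c, fun x ⟨_, ⟨hcx, hxc⟩⟩ ↦
        mem_iInter.2 fun j ↦ ⟨(ha j).trans_le ((ha c).symm ▸ hcx), hxc.trans_le (hc j)⟩⟩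
  · by_cases hright : ∃ c, κ ≤ a c
    · obtain ⟨c, hc⟩ := hright
      exact ⟨c, fun x ⟨⟨_, hxu⟩, ⟨hcx, _⟩⟩ ↦ absurd (hu ▸ hxu) (not_lt.2 (hc.trans hcx))⟩
    · push Not at hright
      have hb : ∀ j, b j = κ := fun j ↦ (h j).resolve_left (hright j).ne
      obtain ⟨c, hc⟩ := Finite.exists_max a
      exact ⟨c, fun x ⟨_, ⟨hcx, hxc⟩⟩ ↦
        mem_iInter.2 fun j ↦ ⟨(hc j).trans hcx, (hb j).symm ▸ (hb c) ▸ hxc⟩⟩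

end Intervals

theorem inter_range_subset_iInter {ι α β : Type*} {f : β → α} (hf : Injective f)
    {E : ι → Set α} {I : ι → Set β} (hE : ∀ j, E j ∩ range f = f '' I j) {u v : ι}
    (h : I u ∩ I v ⊆ ⋂ j, I j) : E u ∩ E v ∩ range f ⊆ ⋂ j, E j := by
  rintro _ ⟨⟨hu, hv⟩, t, rfl⟩
  have mem : ∀ j, f t ∈ E j ↔ t ∈ I j := fun j ↦ by
    rw [← hf.mem_set_image, ← hE j]; simp
  exact mem_iInter.2 fun j ↦ (mem j).2 (mem_iInter.1 (h ⟨(mem u).1 hu, (mem v).1 hv⟩) j)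

theorem exists_three_ne_inter_eq_iInter {ι α : Type*} [Fintype ι] (hcard : 3 ≤ Fintype.card ι)
    (S : ι → Set α) {u v w : ι} (h : S u ∩ S v ∩ S w ⊆ ⋂ j, S j) :
    ∃ a b c, a ≠ b ∧ b ≠ c ∧ a ≠ c ∧ S a ∩ S b ∩ S c = ⋂ j, S j := by
  classical
  obtain ⟨T, huvw, -, hT⟩ := Finset.exists_subsuperset_card_eq (Finset.subset_univ {u, v, w})
    Finset.card_le_three (by rwa [Finset.card_univ])
  obtain ⟨a, b, c, hab, hac, hbc, rfl⟩ := Finset.card_eq_three.1 hT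
  refine ⟨a, b, c, hab, hbc, hac, Subset.antisymm ?_ fun x hx ↦ ?_⟩
  · rintro x ⟨⟨ha, hb⟩, hc⟩
    have hT : ∀ j ∈ ({a, b, c} : Finset ι), x ∈ S j := by simp [*]
    exact h ⟨⟨hT u (huvw (by simp)), hT v (huvw (by simp))⟩, hT w (huvw (by simp))⟩
  · exact ⟨⟨mem_iInter.1 hx a, mem_iInter.1 hx b⟩, mem_iInter.1 hx c⟩

theorem image_Ico_eq_of_forall_add {α : Type*} {f : ℕ → α} {g : ℤ → α} {i n : ℕ} {k : ℤ}
    (h : ∀ s < n, f (i + s) = g (k + s)) : f '' Ico i (i + n) = g '' Ico k (k + n) := by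
  ext e
  constructor
  · rintro ⟨t, ⟨ht, ht'⟩, rfl⟩
    obtain ⟨s, rfl⟩ := Nat.exists_eq_add_of_le ht
    exact ⟨k + s, ⟨by omega, by omega⟩, (h s (by omega)).symm⟩
  · rintro ⟨r, ⟨hr, hr'⟩, rfl⟩
    exact ⟨i + (r - k).toNat, ⟨by omega, by omega⟩, by rw [h _ (by omega)]; congr; omega⟩

theorem image_Ico_eq_of_forall_sub {α : Type*} {f : ℕ → α} {g : ℤ → α} {i n : ℕ} {k : ℤ}
    (h : ∀ s < n, f (i + s) = g (k - s - 1)) : f '' Ico i (i + n) = g '' Ico (k - n) k := by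
  ext e
  constructor
  · rintro ⟨t, ⟨ht, ht'⟩, rfl⟩
    obtain ⟨s, rfl⟩ := Nat.exists_eq_add_of_le ht
    exact ⟨k - s - 1, ⟨by omega, by omega⟩, (h s (by omega)).symm⟩
  · rintro ⟨r, ⟨hr, hr'⟩, rfl⟩
    exact ⟨i + (k - r - 1).toNat, ⟨by omega, by omega⟩, by rw [h _ (by omega)]; congr; omega⟩

theorem eq_of_countP_range_le_one {p : ℕ → Bool} {n i j : ℕ} (h : (List.range n).countP p ≤ 1)
    (hi : i < n) (hj : j < n) (hpi : p i) (hpj : p j) : i = j := by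
  have hcard : ((Finset.range n).filter (p ·)).card ≤ 1 := by
    rw [Finset.card_def, Finset.filter_val, ← Multiset.countP_eq_card_filter, Finset.range_val,
      Multiset.range, Multiset.coe_countP]
    simpa using h
  exact Finset.card_le_one.1 hcard i (by simp [hi, hpi]) j (by simp [hj, hpj])

namespace GridLine

theorem eq_of_edge_eq {l l' : GridLine} {t t' : ℤ} (h : l.edge t = l'.edge t') :
    l = l' ∧ t = t' := by
  rcases l with ⟨_ | _ | _, c⟩ <;> rcases l' with ⟨_ | _ | _, c'⟩ <;>
    simp only [edge, pt, Sym2.eq_iff, Prod.mk.injEq, mk.injEq, reduceCtorEq, true_and,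
      false_and] at h ⊢ <;> omega

theorem edge_injective (l : GridLine) : Injective l.edge :=
  fun _ _ h ↦ (eq_of_edge_eq h).2

theorem disjoint_edges {l l' : GridLine} (h : l ≠ l') : Disjoint l.edges l'.edges := by
  rw [disjoint_left]
  rintro _ ⟨t, rfl⟩ ⟨t', ht'⟩
  exact h (eq_of_edge_eq ht'.symm).1

theorem eq_of_pt_eq_pt {l l' : GridLine} (h : l ≠ l') {s s' t t' : ℤ}
    (hs : l.pt s = l'.pt s') (ht : l.pt t = l'.pt t') : s = t ∧ s' = t' := by
  rcases l with ⟨_ | _ | _, c⟩ <;> rcases l' with ⟨_ | _ | _, c'⟩ <;>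
    simp only [pt, Prod.mk.injEq, ne_eq, mk.injEq, reduceCtorEq, true_and, false_and,
      not_false_eq_true] at h hs ht ⊢ <;> omega

theorem edir_edge (l : GridLine) (t t' : ℤ) : edir (l.edge t) = edir (l.edge t') := by
  rcases l with ⟨_ | _ | _, c⟩ <;> simp [edge, pt, edir]

theorem exists_ne_pt_eq (l : GridLine) (k : ℤ) : ∃ l' k', l' ≠ l ∧ l'.pt k' = l.pt k := by
  rcases l with ⟨_ | _ | _, c⟩
  · exact ⟨⟨.V, k⟩, c, by simp, by simp [pt]⟩
  · exact ⟨⟨.H, k⟩, c, by simp, by simp [pt]⟩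
  · exact ⟨⟨.H, k⟩, c + k, by simp, by simp [pt]⟩

end GridLine

/-- Two rays, possibly empty, from a common corner along distinct grid lines: the shape of the
edge set of a path with at most one bend. -/
structure Hook where
  l₁ : GridLine
  l₂ : GridLine
  ne : l₁ ≠ l₂
  k₁ : ℤ
  k₂ : ℤ
  corner : l₁.pt k₁ = l₂.pt k₂
  a₁ : ℤ
  b₁ : ℤ
  a₂ : ℤ
  b₂ : ℤ
  ray₁ : a₁ = k₁ ∨ b₁ = k₁
  ray₂ : a₂ = k₂ ∨ b₂ = k₂

namespace Hook

section

variable (H : Hook)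

def edges : Set (Sym2 (ℤ × ℤ)) := H.l₁.edge '' Ico H.a₁ H.b₁ ∪ H.l₂.edge '' Ico H.a₂ H.b₂

def swap : Hook :=
  ⟨H.l₂, H.l₁, H.ne.symm, H.k₂, H.k₁, H.corner.symm, H.a₂, H.b₂, H.a₁, H.b₁, H.ray₂, H.ray₁⟩

theorem edges_swap : H.swap.edges = H.edges := union_comm _ _

theorem edges_subset : H.edges ⊆ H.l₁.edges ∪ H.l₂.edges :=
  union_subset_union (image_subset_range _ _) (image_subset_range _ _)

theorem edges_inter_l₁ : H.edges ∩ H.l₁.edges = H.l₁.edge '' Ico H.a₁ H.b₁ := by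
  rw [edges, union_inter_distrib_right,
    ((GridLine.disjoint_edges H.ne.symm).mono_left (image_subset_range _ _)).inter_eq,
    union_empty]
  exact inter_eq_left.2 (image_subset_range _ _)

theorem edges_inter_l₂ : H.edges ∩ H.l₂.edges = H.l₂.edge '' Ico H.a₂ H.b₂ := by
  rw [← H.edges_swap]
  exact H.swap.edges_inter_l₁

theorem eq_or_eq_of_inter_nonempty {l : GridLine} (h : (H.edges ∩ l.edges).Nonempty) :
    l = H.l₁ ∨ l = H.l₂ := by
  obtain ⟨x, hx, hxl⟩ := h
  by_contra! hl
  rcases H.edges_subset hx with hx' | hx'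
  · exact (GridLine.disjoint_edges hl.1).ne_of_mem hxl hx' rfl
  · exact (GridLine.disjoint_edges hl.2).ne_of_mem hxl hx' rfl

theorem exists_l₁_eq {l : GridLine} (h : (H.edges ∩ l.edges).Nonempty) :
    ∃ H' : Hook, H'.edges = H.edges ∧ H'.l₁ = l := by
  rcases H.eq_or_eq_of_inter_nonempty h with rfl | rfl
  exacts [⟨H, rfl, rfl⟩, ⟨H.swap, H.edges_swap, rfl⟩]

end

section

variable {ι : Type*} [Finite ι] [Nonempty ι]

theorem exists_inter_subset_iInter_of_l₁_eq (H : ι → Hook) {L : GridLine}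
    (hL : ∀ j, (H j).l₁ = L) :
    ∃ u v c, (H u).edges ∩ (H v).edges ∩ (H c).edges ⊆ ⋂ j, (H j).edges := by
  have htrL : ∀ j, (H j).edges ∩ range L.edge = L.edge '' Ico (H j).a₁ (H j).b₁ :=
    fun j ↦ hL j ▸ (H j).edges_inter_l₁
  obtain ⟨u, v, huv⟩ := exists_Ico_inter_subset_iInter (fun j ↦ (H j).a₁) (fun j ↦ (H j).b₁)
  set M := (H u).l₂
  have hLM : L ≠ M := hL u ▸ (H u).ne
  -- A hook meeting `M` has the lines `L` and `M`, hence its corner where they cross.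
  have htrM : ∀ j, ∃ a b, (a = (H u).k₂ ∨ b = (H u).k₂) ∧
      (H j).edges ∩ range M.edge = M.edge '' Ico a b := by
    intro j
    by_cases hj : ((H j).edges ∩ M.edges).Nonempty
    · have hM : (H j).l₂ = M :=
        (((H j).eq_or_eq_of_inter_nonempty hj).resolve_left (hL j ▸ hLM.symm)).symm
      have hk : (H j).k₂ = (H u).k₂ := (GridLine.eq_of_pt_eq_pt hLM
        (hL j ▸ hM ▸ (H j).corner) (hL u ▸ (H u).corner)).2
      exact ⟨_, _, hk ▸ (H j).ray₂, hM ▸ (H j).edges_inter_l₂⟩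
    · exact ⟨(H u).k₂, (H u).k₂, Or.inl rfl, by
        simpa [GridLine.edges, not_nonempty_iff_eq_empty] using hj⟩
  choose a b hab htrM using htrM
  obtain ⟨c, hc⟩ := exists_Ico_inter_subset_iInter_of_endpoint hab u
  refine ⟨u, v, c, fun x hx ↦ ?_⟩
  rcases (H u).edges_subset hx.1.1 with hxL | hxM
  · exact inter_range_subset_iInter L.edge_injective htrL huv ⟨hx.1, hL u ▸ hxL⟩
  · exact inter_range_subset_iInter M.edge_injective htrM hc ⟨⟨hx.1.1, hx.2⟩, hxM⟩

theorem exists_inter_subset_iInter (H : ι → Hook) :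
    ∃ u v c, (H u).edges ∩ (H v).edges ∩ (H c).edges ⊆ ⋂ j, (H j).edges := by
  obtain ⟨i⟩ := ‹Nonempty ι›
  have of_forall_meets : ∀ L : GridLine, (∀ j, ((H j).edges ∩ L.edges).Nonempty) →
      ∃ u v c, (H u).edges ∩ (H v).edges ∩ (H c).edges ⊆ ⋂ j, (H j).edges := by
    intro L hL
    choose H' hH' hl using fun j ↦ (H j).exists_l₁_eq (hL j)
    simpa only [hH'] using exists_inter_subset_iInter_of_l₁_eq H' hl
  by_cases h₁ : ∀ j, ((H j).edges ∩ (H i).l₁.edges).Nonempty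
  · exact of_forall_meets _ h₁
  by_cases h₂ : ∀ j, ((H j).edges ∩ (H i).l₂.edges).Nonempty
  · exact of_forall_meets _ h₂
  obtain ⟨j₁, hj₁⟩ := not_forall.1 h₁
  obtain ⟨j₂, hj₂⟩ := not_forall.1 h₂
  refine ⟨i, j₁, j₂, fun x ⟨⟨hi, hx₁⟩, hx₂⟩ ↦ ?_⟩
  rcases (H i).edges_subset hi with hx | hx
  exacts [(hj₁ ⟨x, hx₁, hx⟩).elim, (hj₂ ⟨x, hx₂, hx⟩).elim]

end

end Hook

def gridSteps : Finset (ℤ × ℤ) := {(1, 0), (-1, 0), (0, 1), (0, -1), (1, 1), (-1, -1)}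

theorem tGrid_adj_iff {u v : ℤ × ℤ} : TGrid.Adj u v ↔ v - u ∈ gridSteps := by
  simp only [TGrid, gridSteps, Finset.mem_insert, Finset.mem_singleton, Prod.ext_iff,
    Prod.fst_sub, Prod.snd_sub]

theorem eq_or_eq_neg_of_mem_gridSteps {d e : ℤ × ℤ} (hd : d ∈ gridSteps) (he : e ∈ gridSteps)
    (h : (|d.1|, |d.2|) = (|e.1|, |e.2|)) : e = d ∨ e = -d := by
  simp only [gridSteps, Finset.mem_insert, Finset.mem_singleton] at hd he
  rcases hd with rfl | rfl | rfl | rfl | rfl | rfl <;>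
    rcases he with rfl | rfl | rfl | rfl | rfl | rfl <;> simp_all

theorem exists_gridLine_add_zsmul {d : ℤ × ℤ} (hd : d ∈ gridSteps) (q : ℤ × ℤ) :
    ∃ (l : GridLine) (k : ℤ), (∀ s : ℤ, q + s • d = l.pt (k + s)) ∨
      ∀ s : ℤ, q + s • d = l.pt (k - s) := by
  simp only [gridSteps, Finset.mem_insert, Finset.mem_singleton] at hd
  rcases hd with rfl | rfl | rfl | rfl | rfl | rfl
  · exact ⟨⟨.H, q.2⟩, q.1, .inl fun s ↦ by ext <;> simp [GridLine.pt]⟩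
  · exact ⟨⟨.H, q.2⟩, q.1, .inr fun s ↦ by ext <;> simp [GridLine.pt]; ring⟩
  · exact ⟨⟨.V, q.1⟩, q.2, .inl fun s ↦ by ext <;> simp [GridLine.pt]⟩
  · exact ⟨⟨.V, q.1⟩, q.2, .inr fun s ↦ by ext <;> simp [GridLine.pt]; ring⟩
  · exact ⟨⟨.D, q.1 - q.2⟩, q.2, .inl fun s ↦ by ext <;> simp [GridLine.pt]; ring⟩
  · exact ⟨⟨.D, q.1 - q.2⟩, q.2, .inr fun s ↦ by ext <;> simp [GridLine.pt] <;> ring⟩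

section Walk

variable {u v : ℤ × ℤ}

def stepVec (w : TGrid.Walk u v) (t : ℕ) : ℤ × ℤ := w.getVert (t + 1) - w.getVert t

theorem stepVec_mem_gridSteps (w : TGrid.Walk u v) {t : ℕ} (ht : t < w.length) :
    stepVec w t ∈ gridSteps :=
  tGrid_adj_iff.1 (w.adj_getVert_succ ht)

theorem edir_wEdge (w : TGrid.Walk u v) (t : ℕ) :
    edir (wEdge w t) = (|(stepVec w t).1|, |(stepVec w t).2|) := by
  simp [edir, wEdge, stepVec, abs_sub_comm]

variable {w : TGrid.Walk u v}

theorem stepVec_succ_eq (hw : w.IsPath) {t : ℕ} (ht : t + 1 < w.length)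
    (h : edir (wEdge w t) = edir (wEdge w (t + 1))) : stepVec w (t + 1) = stepVec w t := by
  rw [edir_wEdge, edir_wEdge] at h
  refine (eq_or_eq_neg_of_mem_gridSteps (stepVec_mem_gridSteps w (by omega))
    (stepVec_mem_gridSteps w ht) h).resolve_right fun hback ↦ ?_
  have : w.getVert (t + 2) = w.getVert t := by
    simp only [stepVec] at hback
    linear_combination hback
  exact absurd (hw.getVert_injOn (by simp; omega) (by simp; omega) this) (by omega)

theorem stepVec_eq_of_forall_edir_eq (hw : w.IsPath) {i j : ℕ} (hj : j ≤ w.length)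
    (h : ∀ t, i ≤ t → t + 1 < j → edir (wEdge w t) = edir (wEdge w (t + 1))) :
    ∀ t, i ≤ t → t < j → stepVec w t = stepVec w i := by
  intro t hit htj
  induction t, hit using Nat.le_induction with
  | base => rfl
  | succ t hit ih => rw [stepVec_succ_eq hw (by omega) (h t hit htj), ih (by omega)]

theorem getVert_add_eq {i n : ℕ} {d : ℤ × ℤ} (h : ∀ t, i ≤ t → t < i + n → stepVec w t = d)
    {s : ℕ} (hs : s ≤ n) : w.getVert (i + s) = w.getVert i + (s : ℤ) • d := by
  induction s with
  | zero => simp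
  | succ s ih =>
    have hstep := h (i + s) (by omega) (by omega)
    rw [stepVec, sub_eq_iff_eq_add'] at hstep
    rw [← add_assoc, hstep, ih (by omega)]
    push_cast
    rw [add_zsmul, one_zsmul, add_assoc]

theorem exists_gridLine_image_wEdge {i n : ℕ} {d : ℤ × ℤ} (hd : d ∈ gridSteps)
    (h : ∀ t, i ≤ t → t < i + n → stepVec w t = d) :
    ∃ (l : GridLine) (k k' a b : ℤ), l.pt k = w.getVert i ∧ l.pt k' = w.getVert (i + n) ∧
      (a = k ∨ b = k) ∧ (a = k' ∨ b = k') ∧ wEdge w '' Ico i (i + n) = l.edge '' Ico a b := by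
  obtain ⟨l, k, hl | hl⟩ := exists_gridLine_add_zsmul hd (w.getVert i)
  · have hv : ∀ s ≤ n, w.getVert (i + s) = l.pt (k + s) := fun s hs ↦
      (getVert_add_eq h hs).trans (hl s)
    refine ⟨l, k, k + n, k, k + n, by simpa using (hv 0 (by omega)).symm, (hv n le_rfl).symm,
      .inl rfl, .inr rfl, image_Ico_eq_of_forall_add fun s hs ↦ ?_⟩
    rw [wEdge, hv s hs.le, add_assoc, hv (s + 1) hs, GridLine.edge]
    push_cast; ring_nf
  · have hv : ∀ s ≤ n, w.getVert (i + s) = l.pt (k - s) := fun s hs ↦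
      (getVert_add_eq h hs).trans (hl s)
    refine ⟨l, k, k - n, k - n, k, by simpa using (hv 0 (by omega)).symm, (hv n le_rfl).symm,
      .inr rfl, .inl rfl, image_Ico_eq_of_forall_sub fun s hs ↦ ?_⟩
    rw [wEdge, hv s hs.le, add_assoc, hv (s + 1) hs, GridLine.edge, Sym2.eq_swap]
    push_cast; ring_nf

theorem edir_wEdge_eq_of_ne_bend (hP : bendCount w ≤ 1) {b : ℕ} (hb : b + 1 < w.length)
    (hbend : edir (wEdge w b) ≠ edir (wEdge w (b + 1))) {t : ℕ} (ht : t + 1 < w.length)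
    (htb : t ≠ b) : edir (wEdge w t) = edir (wEdge w (t + 1)) :=
  by_contra fun h ↦ htb <|
    eq_of_countP_range_le_one hP (by omega) (by omega) (by simpa using h) (by simpa using hbend)

theorem exists_hook_image_wEdge_of_bend (hw : w.IsPath) (hP : bendCount w ≤ 1) {b : ℕ}
    (hb : b + 1 < w.length) (hbend : edir (wEdge w b) ≠ edir (wEdge w (b + 1))) :
    ∃ H : Hook, H.edges = wEdge w '' Iio w.length := by
  have hst₁ := stepVec_eq_of_forall_edir_eq hw (i := 0) (j := b + 1) (by omega)
    fun t _ ht ↦ edir_wEdge_eq_of_ne_bend hP hb hbend (by omega) (by omega)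
  have hst₂ := stepVec_eq_of_forall_edir_eq hw (i := b + 1) le_rfl
    fun t ht _ ↦ edir_wEdge_eq_of_ne_bend hP hb hbend (by omega) (by omega)
  obtain ⟨l₁, -, k₁, a₁, b₁, -, hk₁, -, hab₁, he₁⟩ := exists_gridLine_image_wEdge
    (stepVec_mem_gridSteps w (by omega)) (i := 0) (n := b + 1)
    fun t _ ht ↦ hst₁ t (by omega) (by omega)
  obtain ⟨l₂, k₂, -, a₂, b₂, hk₂, -, hab₂, -, he₂⟩ := exists_gridLine_image_wEdge
    (stepVec_mem_gridSteps w hb) (i := b + 1) (n := w.length - (b + 1))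
    fun t ht ht' ↦ hst₂ t ht (by omega)
  have hne : l₁ ≠ l₂ := by
    rintro rfl
    obtain ⟨r, -, hr⟩ : wEdge w b ∈ l₁.edge '' Ico a₁ b₁ := he₁ ▸ mem_image_of_mem _ (by simp)
    obtain ⟨r', -, hr'⟩ : wEdge w (b + 1) ∈ l₁.edge '' Ico a₂ b₂ :=
      he₂ ▸ mem_image_of_mem _ (by simp; omega)
    exact hbend (by rw [← hr, ← hr', GridLine.edir_edge])
  refine ⟨⟨l₁, l₂, hne, k₁, k₂, by simpa [hk₂] using hk₁, a₁, b₁, a₂, b₂, hab₁, hab₂⟩, ?_⟩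
  rw [Hook.edges, ← he₁, ← he₂, ← image_union]
  congr 1
  ext t
  simp only [mem_union, mem_Ico, mem_Iio]
  omega

theorem exists_hook_image_wEdge_of_straight (hw : w.IsPath) (hlen : 0 < w.length)
    (h : ∀ t, t + 1 < w.length → edir (wEdge w t) = edir (wEdge w (t + 1))) :
    ∃ H : Hook, H.edges = wEdge w '' Iio w.length := by
  have hst := stepVec_eq_of_forall_edir_eq hw (i := 0) le_rfl fun t _ ht ↦ h t ht
  obtain ⟨l, k, -, a, b, hk, -, hab, -, he⟩ := exists_gridLine_image_wEdge
    (stepVec_mem_gridSteps w hlen) (i := 0) (n := w.length)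
    fun t _ ht ↦ hst t (by omega) (by omega)
  obtain ⟨l', k', hne, hk'⟩ := l.exists_ne_pt_eq k
  refine ⟨⟨l, l', hne.symm, k, k', hk'.symm, a, b, k', k', hab, .inl rfl⟩, ?_⟩
  rw [Hook.edges, ← he, Ico_self, image_empty, union_empty]
  congr 1
  ext t
  simp

end Walk

theorem pEdges_eq_image (P : TPath) : pEdges P = wEdge P.walk '' Iio P.walk.length := by
  ext e
  change e ∈ P.walk.edges ↔ _
  simp only [List.mem_iff_getElem, SimpleGraph.Walk.getElem_edges,
    SimpleGraph.Walk.length_edges, mem_image, mem_Iio, wEdge]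
  grind

theorem exists_hook_edges_eq (P : TPath) (hP : bendCount P.walk ≤ 1) :
    ∃ H : Hook, H.edges = pEdges P := by
  rw [pEdges_eq_image]
  by_cases hbend : ∃ b, b + 1 < P.walk.length ∧
      edir (wEdge P.walk b) ≠ edir (wEdge P.walk (b + 1))
  · obtain ⟨b, hb, hbend⟩ := hbend
    exact exists_hook_image_wEdge_of_bend P.isPath hP hb hbend
  · push Not at hbend
    exact exists_hook_image_wEdge_of_straight P.isPath P.nontriv hbend

/-- Families of B₁-paths on the triangular grid are strong 3-Helly:
any finite family of at least three at-most-one-bend paths contains three members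
whose common edge intersection equals the intersection of the whole family. -/
theorem stmt9 {ι : Type} [Fintype ι]
    (hcard : 3 ≤ Fintype.card ι)
    (P : ι → TPath) (hbend : ∀ i, bendCount (P i).walk ≤ 1) :
    ∃ a b c : ι, a ≠ b ∧ b ≠ c ∧ a ≠ c ∧
      pEdges (P a) ∩ pEdges (P b) ∩ pEdges (P c) = ⋂ i : ι, pEdges (P i) := by
  have : Nonempty ι := Fintype.card_pos_iff.1 (by omega)
  choose H hH using fun i ↦ exists_hook_edges_eq (P i) (hbend i)
  obtain ⟨u, v, w, huvw⟩ := Hook.exists_inter_subset_iInter H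
  simp only [hH] at huvw
  exact exists_three_ne_inter_eq_iInter hcard _ huvw
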